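/- Let l be a finite-dimensional real Lie algebra, (a,⟨·,·⟩ₐ) a finite-dimensional real vector space with a nondegenerate symmetric bilinear form, and ρ : l → End(a) a Lie algebra representation with ⟨ρ(L)A,B⟩ₐ + ⟨A,ρ(L)B⟩ₐ = 0 for all L ∈ l, A,B ∈ a. Let α : l × l → a be an alternating bilinear map satisfying the cocycle condition ρ(L₁)α(L₂,L₃) − ρ(L₂)α(L₁,L₃) + ρ(L₃)α(L₁,L₂) − α([L₁,L₂],L₃) + α([L₁,L₃],L₂) − α([L₂,L₃],L₁) = 0 for all L₁,L₂,L₃ ∈ l, and let γ : l × l × l → ℝ be an alternating trilinear map satisfying, for all L₁,L₂,L₃,L₄ ∈ l, −γ([L₁,L₂],L₃,L₄) + γ([L₁,L₃],L₂,L₄) − γ([L₁,L₄],L₂,L₃) − γ([L₂,L₃],L₁,L₄) + γ([L₂,L₄],L₁,L₃) − γ([L₃,L₄],L₁,L₂) = ⟨α(L₁,L₂),α(L₃,L₄)⟩ₐ − ⟨α(L₁,L₃),α(L₂,L₄)⟩ₐ + ⟨α(L₁,L₄),α(L₂,L₃)⟩ₐ. On d := l* ⊕ a ⊕ l define [Z₁+A₁+L₁,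 Z₂+A₂+L₂] := (L₁·Z₂ − L₂·Z₁ + γ(L₁,L₂,·) − ⟨A₂,α(L₁,·)⟩ₐ + ⟨A₁,α(L₂,·)⟩ₐ + ⟨ρ(·)A₁,A₂⟩ₐ) + (ρ(L₁)A₂ − ρ(L₂)A₁ + α(L₁,L₂)) + [L₁,L₂], where (L·Z)(L') := −Z([L,L']), γ(L₁,L₂,·), ⟨A,α(L,·)⟩ₐ and ⟨ρ(·)A₁,A₂⟩ₐ denote the obvious elements of l*, and define ⟨Z₁+A₁+L₁, Z₂+A₂+L₂⟩_d := ⟨A₁,A₂⟩ₐ + Z₁(L₂) + Z₂(L₁). Then this bracket is a Lie bracket on d (in particular it satisfies the Jacobi identity), and ⟨·,·⟩_d is a nondegenerate symmetric bilinear form that is invariant: ⟨[u,v],w⟩_d + ⟨v,[u,w]⟩_d = 0 for all u,v,w ∈ d. -/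
import Mathlib


open LinearMap

section
variable {l a : Type*} [LieRing l] [LieAlgebra ℝ l] [AddCommGroup a] [Module ℝ a]

/-- The bracket of the quadratic extension d = l* ⊕ a ⊕ l associated with (α,γ). -/
noncomputable def qeBracket (Ba : a →ₗ[ℝ] a →ₗ[ℝ] ℝ) (ρ : l →ₗ[ℝ] a →ₗ[ℝ] a)
    (α : l →ₗ[ℝ] l →ₗ[ℝ] a) (γ : l →ₗ[ℝ] l →ₗ[ℝ] l →ₗ[ℝ] ℝ)
    (p q : (l →ₗ[ℝ] ℝ) × a × l) : (l →ₗ[ℝ] ℝ) × a × l :=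
  (γ p.2.2 q.2.2
      - q.1 ∘ₗ (LieAlgebra.ad ℝ l p.2.2 : l →ₗ[ℝ] l)
      + p.1 ∘ₗ (LieAlgebra.ad ℝ l q.2.2 : l →ₗ[ℝ] l)
      - (Ba q.2.1) ∘ₗ (α p.2.2)
      + (Ba p.2.1) ∘ₗ (α q.2.2)
      + (Ba.flip q.2.1) ∘ₗ (ρ.flip p.2.1),
    ρ p.2.2 q.2.1 - ρ q.2.2 p.2.1 + α p.2.2 q.2.2,
    ⁅p.2.2, q.2.2⁆)

/-- The inner product of the quadratic extension d = l* ⊕ a ⊕ l. -/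
def qeForm (Ba : a →ₗ[ℝ] a →ₗ[ℝ] ℝ) (p q : (l →ₗ[ℝ] ℝ) × a × l) : ℝ :=
  Ba p.2.1 q.2.1 + p.1 q.2.2 + q.1 p.2.2

end

set_option maxHeartbeats 4000000 in
/-- The bracket of the quadratic extension d_{α,γ}(l,a) is a Lie bracket and the canonical
inner product on d = l* ⊕ a ⊕ l is a nondegenerate invariant symmetric bilinear form. -/
theorem stmt10 {l a : Type*} [LieRing l] [LieAlgebra ℝ l] [Module.Finite ℝ l]
    [AddCommGroup a] [Module ℝ a] [Module.Finite ℝ a]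
    (Ba : a →ₗ[ℝ] a →ₗ[ℝ] ℝ)
    (hBsymm : ∀ A B, Ba A B = Ba B A)
    (hBnd : ∀ A : a, (∀ B, Ba A B = 0) → A = 0)
    (ρ : l →ₗ[ℝ] a →ₗ[ℝ] a)
    (hρlie : ∀ (L₁ L₂ : l) (A : a), ρ ⁅L₁, L₂⁆ A = ρ L₁ (ρ L₂ A) - ρ L₂ (ρ L₁ A))
    (hρskew : ∀ (L : l) (A B : a), Ba (ρ L A) B + Ba A (ρ L B) = 0)
    (α : l →ₗ[ℝ] l →ₗ[ℝ] a)
    (hαalt : ∀ L : l, α L L = 0)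
    (hdα : ∀ L₁ L₂ L₃ : l,
      ρ L₁ (α L₂ L₃) - ρ L₂ (α L₁ L₃) + ρ L₃ (α L₁ L₂)
        - α ⁅L₁, L₂⁆ L₃ + α ⁅L₁, L₃⁆ L₂ - α ⁅L₂, L₃⁆ L₁ = 0)
    (γ : l →ₗ[ℝ] l →ₗ[ℝ] l →ₗ[ℝ] ℝ)
    (hγalt₁ : ∀ L L' : l, γ L L L' = 0)
    (hγalt₂ : ∀ L L' : l, γ L L' L' = 0)
    (hdγ : ∀ L₁ L₂ L₃ L₄ : l,
      -γ ⁅L₁, L₂⁆ L₃ L₄ + γ ⁅L₁, L₃⁆ L₂ L₄ - γ ⁅L₁, L₄⁆ L₂ L₃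
        - γ ⁅L₂, L₃⁆ L₁ L₄ + γ ⁅L₂, L₄⁆ L₁ L₃ - γ ⁅L₃, L₄⁆ L₁ L₂ =
      Ba (α L₁ L₂) (α L₃ L₄) - Ba (α L₁ L₃) (α L₂ L₄) + Ba (α L₁ L₄) (α L₂ L₃)) :
    (∀ u v w : (l →ₗ[ℝ] ℝ) × a × l,
        qeBracket Ba ρ α γ (u + v) w = qeBracket Ba ρ α γ u w + qeBracket Ba ρ α γ v w) ∧
      (∀ (c : ℝ) (u v : (l →ₗ[ℝ] ℝ) × a × l),
        qeBracket Ba ρ α γ (c • u) v = c • qeBracket Ba ρ α γ u v) ∧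
      (∀ u : (l →ₗ[ℝ] ℝ) × a × l, qeBracket Ba ρ α γ u u = 0) ∧
      (∀ u v : (l →ₗ[ℝ] ℝ) × a × l, qeBracket Ba ρ α γ u v = -qeBracket Ba ρ α γ v u) ∧
      (∀ u v w : (l →ₗ[ℝ] ℝ) × a × l,
        qeBracket Ba ρ α γ u (qeBracket Ba ρ α γ v w) =
          qeBracket Ba ρ α γ (qeBracket Ba ρ α γ u v) w +
            qeBracket Ba ρ α γ v (qeBracket Ba ρ α γ u w)) ∧
      (∀ u v : (l →ₗ[ℝ] ℝ) × a × l, qeForm Ba u v = qeForm Ba v u) ∧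
      (∀ u v w : (l →ₗ[ℝ] ℝ) × a × l,
        qeForm Ba (u + v) w = qeForm Ba u w + qeForm Ba v w) ∧
      (∀ (c : ℝ) (u v : (l →ₗ[ℝ] ℝ) × a × l), qeForm Ba (c • u) v = c • qeForm Ba u v) ∧
      (∀ u : (l →ₗ[ℝ] ℝ) × a × l, (∀ v, qeForm Ba u v = 0) → u = 0) ∧
      (∀ u v w : (l →ₗ[ℝ] ℝ) × a × l,
        qeForm Ba (qeBracket Ba ρ α γ u v) w + qeForm Ba v (qeBracket Ba ρ α γ u w) = 0) := by

  have hαskew : ∀ x y : l, α x y = -α y x := by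
    intro x y
    have h := hαalt (x + y)
    simp only [map_add, LinearMap.add_apply, hαalt, zero_add, add_zero] at h
    exact eq_neg_of_add_eq_zero_right h
  have hγ12 : ∀ x y z : l, γ x y z = -γ y x z := by
    intro x y z
    have h := hγalt₁ (x + y) z
    simp only [map_add, LinearMap.add_apply, hγalt₁, zero_add, add_zero] at h
    exact eq_neg_of_add_eq_zero_right h
  have hγ23 : ∀ x y z : l, γ x y z = -γ x z y := by
    intro x y z
    have h := hγalt₂ x (y + z)
    simp only [map_add, LinearMap.add_apply, hγalt₂, zero_add, add_zero] at h
    exact eq_neg_of_add_eq_zero_right h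
  have hsk : ∀ (L : l) (A B : a), Ba (ρ L A) B = -Ba A (ρ L B) := fun L A B =>
    eq_neg_of_add_eq_zero_left (hρskew L A B)
  have hdαB : ∀ (X : a) (x y z : l),
      Ba X (ρ x (α y z)) - Ba X (ρ y (α x z)) + Ba X (ρ z (α x y))
        - Ba X (α ⁅x, y⁆ z) + Ba X (α ⁅x, z⁆ y) - Ba X (α ⁅y, z⁆ x) = 0 := by
    intro X x y z
    have h := congrArg (Ba X) (hdα x y z)
    simpa only [map_sub, map_add, map_zero] using h
  have hαB : ∀ (X : a) (x y : l), Ba X (α x y) = -Ba X (α y x) := by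
    intro X x y
    rw [hαskew x y, map_neg]
  have hγrot : ∀ x y z : l, γ x y z = γ z x y := by
    intro x y z
    rw [hγ23, hγ12, neg_neg]
  refine ⟨?_, ?_, ?_, ?_, ?_, ?_, ?_, ?_, ?_, ?_⟩
  · rintro ⟨Z₁, A₁, L₁⟩ ⟨Z₂, A₂, L₂⟩ ⟨Z₃, A₃, L₃⟩
    simp only [qeBracket, Prod.mk_add_mk, Prod.mk.injEq]
    refine ⟨?_, ?_, ?_⟩
    · ext L
      simp only [LinearMap.add_apply, LinearMap.sub_apply, coe_comp, Function.comp_apply,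
        flip_apply, LieAlgebra.ad_apply, map_add, LinearMap.add_apply, add_lie]
      ring
    · simp only [map_add, LinearMap.add_apply]
      abel
    · rw [add_lie]
  · rintro c ⟨Z₁, A₁, L₁⟩ ⟨Z₂, A₂, L₂⟩
    simp only [qeBracket, Prod.smul_mk, Prod.mk.injEq]
    refine ⟨?_, ?_, ?_⟩
    · ext L
      simp only [LinearMap.add_apply, LinearMap.sub_apply, LinearMap.smul_apply, coe_comp,
        Function.comp_apply, flip_apply, LieAlgebra.ad_apply, map_smul, LinearMap.smul_apply,
        smul_eq_mul, smul_lie]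
      ring
    · simp only [map_smul, LinearMap.smul_apply, smul_sub, smul_add]
    · rw [smul_lie]
  · rintro ⟨Z, A, L⟩
    simp only [qeBracket, Prod.mk_eq_zero]
    refine ⟨?_, ?_, ?_⟩
    · ext L'
      simp only [LinearMap.add_apply, LinearMap.sub_apply, coe_comp, Function.comp_apply,
        flip_apply, LieAlgebra.ad_apply, LinearMap.zero_apply]
      have h1 := hγalt₁ L L'
      have h2 := hρskew L' A A
      have h3 := hBsymm (ρ L' A) A
      linarith
    · simp only [hαalt, add_zero, sub_self]
    · rw [lie_self]
  · rintro ⟨Z₁, A₁, L₁⟩ ⟨Z₂, A₂, L₂⟩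
    simp only [qeBracket, Prod.neg_mk, Prod.mk.injEq]
    refine ⟨?_, ?_, ?_⟩
    · ext L
      simp only [LinearMap.add_apply, LinearMap.sub_apply, LinearMap.neg_apply, coe_comp,
        Function.comp_apply, flip_apply, LieAlgebra.ad_apply]
      have h1 := hγ12 L₁ L₂ L
      have h2 := hsk L A₁ A₂
      have h3 := hBsymm (ρ L A₂) A₁
      have h4 := hBsymm A₁ (ρ L A₂)
      linarith
    · rw [hαskew L₁ L₂]
      abel
    · rw [lie_skew]
  · rintro ⟨Z₁, A₁, L₁⟩ ⟨Z₂, A₂, L₂⟩ ⟨Z₃, A₃, L₃⟩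
    simp only [qeBracket, Prod.mk_add_mk, Prod.mk.injEq]
    refine ⟨?_, ?_, ?_⟩
    · ext L
      simp only [LinearMap.add_apply, LinearMap.sub_apply, coe_comp, Function.comp_apply,
        flip_apply, LieAlgebra.ad_apply, map_add, map_sub, LinearMap.add_apply,
        LinearMap.sub_apply, hρlie, lie_lie]
      linear_combination
        hdγ L₁ L₂ L₃ L
        + hγ12 L₁ ⁅L₂, L₃⁆ L - hγrot L₂ L₃ ⁅L₁, L⁆ - hγrot L₁ L₂ ⁅L₃, L⁆
        - hγ12 L₂ ⁅L₁, L₃⁆ L + hγrot L₁ L₃ ⁅L₂, L⁆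
        + hBsymm (α L₁ L) (α L₂ L₃)
        - hdαB A₁ L₂ L₃ L + hsk L A₁ (α L₂ L₃) + hsk L₂ A₁ (α L₃ L) - hsk L₃ A₁ (α L₂ L)
        - hαB A₁ L₂ ⁅L₃, L⁆ + hαB A₁ L₃ ⁅L₂, L⁆
        + hdαB A₂ L₁ L₃ L - hsk L₁ A₂ (α L₃ L) + hsk L₃ A₂ (α L₁ L) - hsk L A₂ (α L₁ L₃)
        - hαB A₂ L₃ ⁅L₁, L⁆ + hαB A₂ L₁ ⁅L₃, L⁆
        - hdαB A₃ L₁ L₂ L + hsk L₁ A₃ (α L₂ L) - hsk L₂ A₃ (α L₁ L)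
        - hBsymm (ρ L (α L₁ L₂)) A₃ + hαB A₃ L₂ ⁅L₁, L⁆ - hαB A₃ L₁ ⁅L₂, L⁆
        - hρskew L₁ (ρ L A₂) A₃ + hρskew L₂ (ρ L A₁) A₃
        - hρskew L₃ (ρ L A₁) A₂ + hρskew L (ρ L₃ A₁) A₂ - hBsymm (ρ L₃ A₁) (ρ L A₂)
    · simp only [map_add, map_sub, LinearMap.add_apply, LinearMap.sub_apply, hρlie, lie_lie]
      linear_combination (norm := module) hdα L₁ L₂ L₃ + hαskew L₁ ⁅L₂, L₃⁆ - hαskew L₂ ⁅L₁, L₃⁆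
    · rw [lie_lie]; abel
  · rintro ⟨Z₁, A₁, L₁⟩ ⟨Z₂, A₂, L₂⟩
    simp only [qeForm]
    rw [hBsymm]
    ring
  · rintro ⟨Z₁, A₁, L₁⟩ ⟨Z₂, A₂, L₂⟩ ⟨Z₃, A₃, L₃⟩
    simp only [qeForm, Prod.mk_add_mk, map_add, LinearMap.add_apply]
    ring
  · rintro c ⟨Z₁, A₁, L₁⟩ ⟨Z₂, A₂, L₂⟩
    simp only [qeForm, Prod.smul_mk, map_smul, LinearMap.smul_apply, smul_eq_mul]
    ring
  · rintro ⟨Z, A, L⟩ h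
    have hA : A = 0 := by
      refine hBnd A fun B => ?_
      have := h (0, B, 0)
      simpa [qeForm] using this
    have hL : L = 0 := by
      rw [← Module.forall_dual_apply_eq_zero_iff ℝ]
      intro φ
      have := h (φ, 0, 0)
      simpa [qeForm] using this
    have hZ : Z = 0 := by
      ext L'
      have := h (0, 0, L')
      simpa [qeForm] using this
    simp [hA, hL, hZ]
  · rintro ⟨Z₁, A₁, L₁⟩ ⟨Z₂, A₂, L₂⟩ ⟨Z₃, A₃, L₃⟩
    simp only [qeForm, qeBracket, LinearMap.add_apply, LinearMap.sub_apply, coe_comp,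
      Function.comp_apply, flip_apply, LieAlgebra.ad_apply, map_add, map_sub]
    have h1 := hγ23 L₁ L₂ L₃
    have h2 := hρskew L₁ A₂ A₃
    have h3 := hρskew L₂ A₁ A₃
    have h4 := hρskew L₃ A₁ A₂
    have h5 := hBsymm (α L₁ L₂) A₃
    have h6 := hBsymm A₂ (α L₁ L₃)
    have h7 := hαB A₁ L₂ L₃
    have h8 := hBsymm (ρ L₂ A₁) A₃
    have h9 := hBsymm (ρ L₃ A₁) A₂
    have hsw : (⁅L₃, L₂⁆ : l) = -⁅L₂, L₃⁆ := neg_eq_iff_eq_neg.mp (lie_skew L₂ L₃)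
    have h10 : Z₁ ⁅L₃, L₂⁆ = -Z₁ ⁅L₂, L₃⁆ := by rw [hsw, map_neg]
    have h11 := hBsymm A₂ (ρ L₃ A₁)
    have h12 := hBsymm A₃ (α L₁ L₂)
    linarith
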